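/- For fixed d > 0 and rectangle dimensions A_x, A_z, the SNR objective γ(p,q) = Σ_{x ∈ {A_x/2 ± p}} Σ_{z ∈ {A_z/2 ± q}} arctan(xz/(d√(d² + x² + z²))) attained over p ∈ [r Φ − (L_x−A_x)/2, rΦ + (L_x−A_x)/2] (similarly q) is maximized by choosing the center (r_x, r_z) as the point of the feasible box closest to (rΦ, rΘ) (nearest-neighbor criterion). -/

import Mathlib

/-- Sum over the four corners `x ∈ {A_x/2 ± p}`, `z ∈ {A_z/2 ± q}` of
`arctan(xz/(d·√(d² + x² + z²)))`, with `p, q` the offsets of the user's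
projection from the aperture center. -/
noncomputable def cornerSum (d Ax Az p q : ℝ) : ℝ :=
  Real.arctan ((Ax / 2 + p) * (Az / 2 + q) /
      (d * Real.sqrt (d ^ 2 + (Ax / 2 + p) ^ 2 + (Az / 2 + q) ^ 2))) +
  Real.arctan ((Ax / 2 + p) * (Az / 2 - q) /
      (d * Real.sqrt (d ^ 2 + (Ax / 2 + p) ^ 2 + (Az / 2 - q) ^ 2))) +
  Real.arctan ((Ax / 2 - p) * (Az / 2 + q) /
      (d * Real.sqrt (d ^ 2 + (Ax / 2 - p) ^ 2 + (Az / 2 + q) ^ 2))) +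
  Real.arctan ((Ax / 2 - p) * (Az / 2 - q) /
      (d * Real.sqrt (d ^ 2 + (Ax / 2 - p) ^ 2 + (Az / 2 - q) ^ 2)))

/-- The point of `[lo, hi]` closest to `c`. -/
noncomputable def clamp (lo hi c : ℝ) : ℝ := max lo (min hi c)

/-! Write `F_A(t) = t / (A √(A + t²))` (`cornerSlope A`), a primitive of `(A + t²)^(-3/2)`.
The corner term `arctan (x z / (d √(d² + x² + z²)))` has `x`-derivative `d · F_{d² + x²}(z)`, so
the `p`-derivative of the objective is `d · Σ_{z = A_z/2 ± q} (F_{A'}(z) - F_A(z))` with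
`A = d² + (A_x/2 - p)²` and `A' = d² + (A_x/2 + p)²`. For `p ≥ 0` we have `A ≤ A'`, `F_A - F_{A'}`
is increasing (its derivative is `(A + t²)^(-3/2) - (A' + t²)^(-3/2) ≥ 0`) and `F` is odd, so this
derivative is `≤ 0`. The objective is even in `p`, hence decreasing in `|p|`, and by symmetry in
`|q|`: it is maximised by the feasible center minimising `|rΦ - r_x|` and `|rΘ - r_z|`, which is
the clamped projection. -/

open Real

noncomputable def cornerTerm (d x z : ℝ) : ℝ :=
  arctan (x * z / (d * √(d ^ 2 + x ^ 2 + z ^ 2)))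

noncomputable def cornerSlope (A t : ℝ) : ℝ :=
  t / (A * √(A + t ^ 2))

lemma hasDerivAt_cornerSlope {A : ℝ} (hA : 0 < A) (t : ℝ) :
    HasDerivAt (cornerSlope A) (1 / ((A + t ^ 2) * √(A + t ^ 2))) t := by
  have hpos : 0 < A + t ^ 2 := by positivity
  have hsq : √(A + t ^ 2) ^ 2 = A + t ^ 2 := sq_sqrt hpos.le
  have hsqrt : HasDerivAt (fun t => √(A + t ^ 2)) (2 * t / (2 * √(A + t ^ 2))) t := by
    refine HasDerivAt.sqrt ?_ hpos.ne'
    simpa using (hasDerivAt_pow 2 t).const_add A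
  refine ((hasDerivAt_id' t).div (hsqrt.const_mul A) (by positivity)).congr_deriv ?_
  field_simp
  linear_combination t ^ 2 * hsq

lemma cornerSlope_neg (A t : ℝ) : cornerSlope A (-t) = -cornerSlope A t := by
  simp only [cornerSlope, neg_sq, neg_div]

lemma monotone_cornerSlope_sub {A A' : ℝ} (hA : 0 < A) (hAA' : A ≤ A') :
    Monotone (cornerSlope A - cornerSlope A') := by
  have hA' : 0 < A' := hA.trans_le hAA'
  have hderiv (t : ℝ) := (hasDerivAt_cornerSlope hA t).sub (hasDerivAt_cornerSlope hA' t)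
  refine monotone_of_deriv_nonneg (fun t => (hderiv t).differentiableAt) fun t => ?_
  rw [(hderiv t).deriv, sub_nonneg]
  have hle : A + t ^ 2 ≤ A' + t ^ 2 := by linarith
  gcongr

lemma hasDerivAt_cornerTerm {d : ℝ} (hd : 0 < d) (x z : ℝ) :
    HasDerivAt (fun x => cornerTerm d x z) (d * cornerSlope (d ^ 2 + x ^ 2) z) x := by
  have hpos : 0 < d ^ 2 + x ^ 2 + z ^ 2 := by positivity
  have hsq : √(d ^ 2 + x ^ 2 + z ^ 2) ^ 2 = d ^ 2 + x ^ 2 + z ^ 2 := sq_sqrt hpos.le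
  have hsqrt : HasDerivAt (fun x => √(d ^ 2 + x ^ 2 + z ^ 2))
      (2 * x / (2 * √(d ^ 2 + x ^ 2 + z ^ 2))) x := by
    refine HasDerivAt.sqrt ?_ hpos.ne'
    simpa using ((hasDerivAt_pow 2 x).const_add (d ^ 2)).add_const (z ^ 2)
  have hnum : HasDerivAt (fun x => x * z) z x := by
    simpa using (hasDerivAt_id x).mul_const z
  refine ((hnum.div (hsqrt.const_mul d) (by positivity)).arctan).congr_deriv ?_
  simp only [cornerSlope, Pi.div_apply]
  field_simp
  linear_combination z * x ^ 2 * hsq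

lemma cornerSum_eq (d Ax Az p q : ℝ) :
    cornerSum d Ax Az p q =
      cornerTerm d (Ax / 2 + p) (Az / 2 + q) + cornerTerm d (Ax / 2 + p) (Az / 2 - q) +
        cornerTerm d (Ax / 2 - p) (Az / 2 + q) + cornerTerm d (Ax / 2 - p) (Az / 2 - q) :=
  rfl

lemma cornerTerm_comm (d x z : ℝ) : cornerTerm d x z = cornerTerm d z x := by
  rw [cornerTerm, cornerTerm, mul_comm x z, add_right_comm]

lemma cornerSum_neg_left (d Ax Az p q : ℝ) : cornerSum d Ax Az (-p) q = cornerSum d Ax Az p q := by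
  simp only [cornerSum_eq, ← sub_eq_add_neg, sub_neg_eq_add]
  abel

lemma cornerSum_abs_left (d Ax Az p q : ℝ) : cornerSum d Ax Az |p| q = cornerSum d Ax Az p q := by
  rcases abs_choice p with h | h <;> simp only [h, cornerSum_neg_left]

lemma cornerSum_comm (d Ax Az p q : ℝ) : cornerSum d Ax Az p q = cornerSum d Az Ax q p := by
  simp only [cornerSum_eq, cornerTerm_comm d (Ax / 2 + p), cornerTerm_comm d (Ax / 2 - p)]
  abel

lemma hasDerivAt_cornerSum_left {d : ℝ} (hd : 0 < d) (Ax Az p q : ℝ) :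
    HasDerivAt (fun p => cornerSum d Ax Az p q)
      (d * ((cornerSlope (d ^ 2 + (Ax / 2 + p) ^ 2) (Az / 2 + q)
          + cornerSlope (d ^ 2 + (Ax / 2 + p) ^ 2) (Az / 2 - q))
        - (cornerSlope (d ^ 2 + (Ax / 2 - p) ^ 2) (Az / 2 + q)
          + cornerSlope (d ^ 2 + (Ax / 2 - p) ^ 2) (Az / 2 - q)))) p := by
  have hplus : HasDerivAt (fun p => Ax / 2 + p) 1 p := (hasDerivAt_id p).const_add _
  have hminus : HasDerivAt (fun p => Ax / 2 - p) (-1) p := (hasDerivAt_id p).const_sub _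
  have hsum := ((((hasDerivAt_cornerTerm hd _ (Az / 2 + q)).comp p hplus).add
    ((hasDerivAt_cornerTerm hd _ (Az / 2 - q)).comp p hplus)).add
    ((hasDerivAt_cornerTerm hd _ (Az / 2 + q)).comp p hminus)).add
    ((hasDerivAt_cornerTerm hd _ (Az / 2 - q)).comp p hminus)
  exact hsum.congr_deriv (by ring)

lemma antitoneOn_cornerSum_left {d Ax Az : ℝ} (hd : 0 < d) (hAx : 0 ≤ Ax) (hAz : 0 ≤ Az)
    (q : ℝ) : AntitoneOn (fun p => cornerSum d Ax Az p q) (Set.Ici 0) := by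
  have hderiv (p : ℝ) := hasDerivAt_cornerSum_left hd Ax Az p q
  have hdiff : Differentiable ℝ (fun p => cornerSum d Ax Az p q) :=
    fun p => (hderiv p).differentiableAt
  refine antitoneOn_of_deriv_nonpos (convex_Ici 0) hdiff.continuous.continuousOn
    hdiff.differentiableOn fun p hp => ?_
  rw [interior_Ici, Set.mem_Ioi] at hp
  rw [(hderiv p).deriv]
  have hnear : d ^ 2 + (Ax / 2 - p) ^ 2 ≤ d ^ 2 + (Ax / 2 + p) ^ 2 := by
    nlinarith [mul_nonneg hAx hp.le]
  -- oddness of `cornerSlope` turns the `A_z/2 - q` terms into values at `q - A_z/2 ≤ A_z/2 + q`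
  have hmono := monotone_cornerSlope_sub (by positivity) hnear
    (show -(Az / 2 - q) ≤ Az / 2 + q by linarith)
  simp only [Pi.sub_apply, cornerSlope_neg] at hmono
  exact mul_nonpos_of_nonneg_of_nonpos hd.le (by linarith)

lemma cornerSum_le_of_abs_le_left {d Ax Az : ℝ} (hd : 0 < d) (hAx : 0 ≤ Ax) (hAz : 0 ≤ Az)
    {p p' : ℝ} (q : ℝ) (h : |p'| ≤ |p|) : cornerSum d Ax Az p q ≤ cornerSum d Ax Az p' q := by
  rw [← cornerSum_abs_left d Ax Az p, ← cornerSum_abs_left d Ax Az p']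
  exact antitoneOn_cornerSum_left hd hAx hAz q (abs_nonneg p') (abs_nonneg p) h

lemma cornerSum_le_of_abs_le_right {d Ax Az : ℝ} (hd : 0 < d) (hAx : 0 ≤ Ax) (hAz : 0 ≤ Az)
    (p : ℝ) {q q' : ℝ} (h : |q'| ≤ |q|) : cornerSum d Ax Az p q ≤ cornerSum d Ax Az p q' := by
  rw [cornerSum_comm d Ax Az p q, cornerSum_comm d Ax Az p q']
  exact cornerSum_le_of_abs_le_left hd hAz hAx p h

lemma clamp_mem {lo hi : ℝ} (h : lo ≤ hi) (c : ℝ) : clamp lo hi c ∈ Set.Icc lo hi :=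
  (Set.projIcc lo hi h c).2

lemma abs_sub_clamp_le {lo hi r : ℝ} (hr : r ∈ Set.Icc lo hi) (c : ℝ) :
    |c - clamp lo hi c| ≤ |c - r| := by
  obtain ⟨hlo, hhi⟩ := hr
  simp only [clamp, abs_le]
  grind

/-- Theorem 1 (nearest-neighbor criterion): over aperture centers
`(r_x, r_z)` in the feasible box
`[(A_x−L_x)/2, (L_x−A_x)/2] × [(A_z−L_z)/2, (L_z−A_z)/2]`, the LoS SNR
objective `γ(rΦ − r_x, rΘ − r_z)` is maximized by taking `(r_x, r_z)` to be
the point of the feasible box closest to the user projection `(rΦ, rΘ)`. -/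
theorem stmt7 (d Ax Az Lx Lz u v : ℝ) (hd : 0 < d) (hAx : 0 < Ax)
    (hAz : 0 < Az) (hxL : Ax ≤ Lx) (hzL : Az ≤ Lz) :
    clamp ((Ax - Lx) / 2) ((Lx - Ax) / 2) u ∈
      Set.Icc ((Ax - Lx) / 2) ((Lx - Ax) / 2) ∧
    clamp ((Az - Lz) / 2) ((Lz - Az) / 2) v ∈
      Set.Icc ((Az - Lz) / 2) ((Lz - Az) / 2) ∧
    ∀ rx ∈ Set.Icc ((Ax - Lx) / 2) ((Lx - Ax) / 2),
      ∀ rz ∈ Set.Icc ((Az - Lz) / 2) ((Lz - Az) / 2),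
        cornerSum d Ax Az (u - rx) (v - rz) ≤
          cornerSum d Ax Az (u - clamp ((Ax - Lx) / 2) ((Lx - Ax) / 2) u)
            (v - clamp ((Az - Lz) / 2) ((Lz - Az) / 2) v) := by
  refine ⟨clamp_mem (by linarith) u, clamp_mem (by linarith) v, fun rx hrx rz hrz => ?_⟩
  exact (cornerSum_le_of_abs_le_left hd hAx.le hAz.le _ (abs_sub_clamp_le hrx u)).trans
    (cornerSum_le_of_abs_le_right hd hAx.le hAz.le _ (abs_sub_clamp_le hrz v))
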